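/- arXiv:1508.03026 — 7 statements merged into one kernel-verified Lean document; each statement's English description precedes it below -/
import Mathlib

section
/- Let F = (f₁,…,f_n) : (𝔽₂)ⁿ → (𝔽₂)ⁿ be a Boolean network and suppose the coordinate function f_t admits a layer representation with layers L₁,…,L_r, canalizing inputs (a_j), and constant b. Let k ∈ L_ρ for some 1 ≤ ρ ≤ r, let u ∈ (𝔽₂)ⁿ, and set v = F(u). Assume: (1) for every i < ρ and every j ∈ L_i, u_j ≠ a_j (no variable in a more dominant layer assumes its canalizing input at u); (2) a_k = 0; (3) u_k = 1; and (4) b + (ρ − 1) = v_t + 1 in 𝔽₂ (the canalizing output of x_k is the negation of v_t). Then the network F′ obtained from F by deleting the edge x_k → x_t satisfies F′(u)_t = v_t + 1; in particular F′(u) ≠ v, i.e., the state-space transition (u, v) is eliminated. -/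
/-!
After deleting `x_k → x_t`, the new `f_t` is evaluated at `u[k := 0]`. There `x_k` sits at its
canalizing input `0`, so `M_ρ = 0`, while every variable of a more dominant layer keeps its value
`u_j ≠ a_j`, so `M_i = 1` for `i < ρ`. The nested form then collapses to the canalizing output
`b + ρ = v_t + 1`.
-/

/-- Evaluation of the nested expression built from a list of (already evaluated)
extended monomial values `[M₁, …, M_r]` and a core value `p`:
`nestAux [] p = p` and `nestAux (m :: ms) p = m * nestAux ms p + 1`.
With this convention, the layer form
`f = M₁(M₂(⋯(M_{r−1}(M_r·P_c + 1) + 1)⋯) + 1) + b` equals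
`nestAux [M₁,…,M_r] P_c + 1 + b` in `ZMod 2`. -/
def nestAux : List (ZMod 2) → ZMod 2 → ZMod 2
  | [], p => p
  | m :: ms, p => m * nestAux ms p + 1

/-- A layer representation of a Boolean function `f : (𝔽₂)ⁿ → 𝔽₂`: `r ≥ 1` pairwise
disjoint nonempty layers `L₁,…,L_r` of variable indices, canalizing inputs `a j`,
a constant `b`, and a core function `Pc` depending only on the variables outside all
layers and having no canalizing variables (or being the constant `1`), such that
`f(x) = M₁(M₂(⋯(M_{r−1}(M_r·P_c + 1) + 1)⋯) + 1) + b`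
where `M_i = ∏_{j ∈ L_i} (x_j + a_j)`, all arithmetic in `𝔽₂ = ZMod 2`. -/
structure LayerRep (n : ℕ) (f : (Fin n → ZMod 2) → ZMod 2) where
  r : ℕ
  r_pos : 0 < r
  L : Fin r → Finset (Fin n)
  a : Fin n → ZMod 2
  b : ZMod 2
  Pc : (Fin n → ZMod 2) → ZMod 2
  layers_nonempty : ∀ i, (L i).Nonempty
  layers_disjoint : ∀ i j, i ≠ j → Disjoint (L i) (L j)
  Pc_depends : ∀ x y : Fin n → ZMod 2,
    (∀ j : Fin n, (∀ i, j ∉ L i) → x j = y j) → Pc x = Pc y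
  Pc_noncanalizing : (∀ x, Pc x = 1) ∨
    (∀ (j : Fin n) (c d : ZMod 2), ¬ ∀ x, x j = c → Pc x = d)
  repr_eq : ∀ x, f x =
    nestAux (List.ofFn fun i => ∏ j ∈ L i, (x j + a j)) (Pc x) + 1 + b

/-- Deleting the edge `x_k → x_t` in the Boolean network `F`: the coordinate
function `f_t` is replaced by `x ↦ f_t(x[k := 0])` (the `k`-th input set to `0`),
all other coordinate functions are unchanged. -/
def deleteEdge {n : ℕ} (F : (Fin n → ZMod 2) → Fin n → ZMod 2) (k t : Fin n) :
    (Fin n → ZMod 2) → Fin n → ZMod 2 :=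
  fun x i => if i = t then F (Function.update x k 0) t else F x i

theorem nestAux_cons_zero (ms : List (ZMod 2)) (p : ZMod 2) : nestAux (0 :: ms) p = 1 := by
  simp [nestAux]

theorem nestAux_cons_one (ms : List (ZMod 2)) (p : ZMod 2) :
    nestAux (1 :: ms) p = nestAux ms p + 1 := by
  simp [nestAux]

theorem nestAux_eq_of_getElem_eq_zero :
    ∀ (l : List (ZMod 2)) (p : ZMod 2) (i : ℕ) (hi : i < l.length),
      l[i] = 0 → (∀ j (hj : j < i), l[j] = 1) → nestAux l p = (i : ZMod 2) + 1
  | m :: ms, p, 0, _, hm, _ => by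
      obtain rfl : m = 0 := hm
      simp [nestAux_cons_zero]
  | m :: ms, p, i + 1, hi, hzero, hone => by
      have hm : m = 1 := by simpa using hone 0 (Nat.succ_pos i)
      have ih := nestAux_eq_of_getElem_eq_zero ms p i (by simpa using hi) (by simpa using hzero)
        fun j hj => by simpa using hone (j + 1) (Nat.succ_lt_succ hj)
      rw [hm, nestAux_cons_one, ih]
      push_cast
      ring

theorem ZMod.two_add_eq_one_of_ne {x a : ZMod 2} (h : x ≠ a) : x + a = 1 := by
  revert x a; decide

namespace LayerRep

variable {n : ℕ} {f : (Fin n → ZMod 2) → ZMod 2} (R : LayerRep n f)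

theorem ne_of_mem_of_mem {i ρ : Fin R.r} (hiρ : i ≠ ρ) {j k : Fin n} (hj : j ∈ R.L i)
    (hk : k ∈ R.L ρ) : j ≠ k :=
  fun hjk => Finset.disjoint_left.mp (R.layers_disjoint i ρ hiρ) hj (hjk ▸ hk)

theorem apply_eq_of_canalizing {ρ : Fin R.r} {k : Fin n} (hk : k ∈ R.L ρ)
    {x : Fin n → ZMod 2} (hxk : x k = R.a k)
    (hdom : ∀ i : Fin R.r, i < ρ → ∀ j ∈ R.L i, x j ≠ R.a j) :
    f x = R.b + ((ρ : ℕ) : ZMod 2) := by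
  have hzero : ∏ j ∈ R.L ρ, (x j + R.a j) = 0 :=
    Finset.prod_eq_zero hk (CharTwo.add_eq_zero.mpr hxk)
  have hone : ∀ i : Fin R.r, i < ρ → ∏ j ∈ R.L i, (x j + R.a j) = 1 := fun i hi =>
    Finset.prod_eq_one fun j hj => ZMod.two_add_eq_one_of_ne (hdom i hi j hj)
  rw [R.repr_eq x, nestAux_eq_of_getElem_eq_zero _ _ ρ (by simp) (by simpa using hzero)
    fun j hj => by simpa using hone ⟨j, hj.trans ρ.isLt⟩ hj, add_assoc _ 1 1, CharTwo.add_self_eq_zero, add_zero, add_comm]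

end LayerRep

theorem deleteEdge_apply_self {n : ℕ} (F : (Fin n → ZMod 2) → Fin n → ZMod 2) (k t : Fin n)
    (x : Fin n → ZMod 2) : deleteEdge F k t x t = F (Function.update x k 0) t := by
  simp [deleteEdge]

/-- Layers are indexed by `Fin R.r`, so `ρ` is `0`-indexed and the canalizing output of its
variables is `b + ρ`. -/
theorem edge_deletion_eliminates_transition_general {n : ℕ}
    (F : (Fin n → ZMod 2) → Fin n → ZMod 2) (t k : Fin n)
    (R : LayerRep n (fun x => F x t)) (ρ : Fin R.r) (hk : k ∈ R.L ρ)
    (u v : Fin n → ZMod 2)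
    (h1 : ∀ i : Fin R.r, i < ρ → ∀ j ∈ R.L i, u j ≠ R.a j)
    (h2 : R.a k = 0)
    (h4 : R.b + ((ρ : ℕ) : ZMod 2) = v t + 1) :
    deleteEdge F k t u t = v t + 1 ∧ deleteEdge F k t u ≠ v := by
  have hdom : ∀ i : Fin R.r, i < ρ → ∀ j ∈ R.L i, Function.update u k 0 j ≠ R.a j :=
    fun i hi j hj => by
      rw [Function.update_of_ne (R.ne_of_mem_of_mem hi.ne hj hk)]
      exact h1 i hi j hj
  have ht : deleteEdge F k t u t = v t + 1 := by
    rw [deleteEdge_apply_self, R.apply_eq_of_canalizing hk (by simp [h2]) hdom, h4]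
  exact ⟨ht, fun h => succ_ne_self (v t) (ht ▸ congrFun h t)⟩

/-- Method 1 (edge deletion): if (1) no variable in a layer of `f_t` more dominant
than that of `x_k` assumes its canalizing input at `u`, (2) `x_k` has canalizing
input `0`, (3) `u_k = 1`, and (4) the canalizing output `b + (ρ − 1)` of `x_k` is the
negation of `v_t`, then deleting the edge `x_k → x_t` eliminates the state-space
transition `(u, v)`, where `v = F(u)`. (Layers are indexed by `Fin R.r`, so the layer
`ρ` here is `0`-indexed and the canalizing output of its variables is `b + ρ`.) -/
theorem edge_deletion_eliminates_transition {n : ℕ}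
    (F : (Fin n → ZMod 2) → Fin n → ZMod 2) (t k : Fin n)
    (R : LayerRep n (fun x => F x t)) (ρ : Fin R.r) (hk : k ∈ R.L ρ)
    (u v : Fin n → ZMod 2) (hv : v = F u)
    (h1 : ∀ i : Fin R.r, i < ρ → ∀ j ∈ R.L i, u j ≠ R.a j)
    (h2 : R.a k = 0) (h3 : u k = 1)
    (h4 : R.b + ((ρ : ℕ) : ZMod 2) = v t + 1) :
    deleteEdge F k t u t = v t + 1 ∧ deleteEdge F k t u ≠ v :=
  edge_deletion_eliminates_transition_general F t k R ρ hk u v h1 h2 h4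
end

section
/- Let F = (f₁,…,f_n) : (𝔽₂)ⁿ → (𝔽₂)ⁿ be a Boolean network and suppose the coordinate function f_t admits a layer representation with layers L₁,…,L_r, canalizing inputs (a_j), and constant b. Let k ∈ L_ρ for some 1 ≤ ρ ≤ r, let u ∈ (𝔽₂)ⁿ, and set v = F(u). Assume: (1) for every i < ρ and every j ∈ L_i, u_j ≠ a_j; (2) a_k = 1; (3) u_k = 0; and (4) b + (ρ − 1) = v_t + 1 in 𝔽₂. Then the network F′ obtained from F by constantly expressing the edge x_k → x_t satisfies F′(u)_t = v_t + 1; in particular F′(u) ≠ v, i.e., the state-space transition (u, v) is eliminated. -/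
/-- Constantly expressing the edge `x_k → x_t` in the Boolean network `F`: the
coordinate function `f_t` is replaced by `x ↦ f_t(x[k := 1])` (the `k`-th input set
to `1`), all other coordinate functions are unchanged. -/
def expressEdge {n : ℕ} (F : (Fin n → ZMod 2) → Fin n → ZMod 2) (k t : Fin n) :
    (Fin n → ZMod 2) → Fin n → ZMod 2 :=
  fun x i => if i = t then F (Function.update x k 1) t else F x i

namespace ZMod

theorem add_eq_one_of_ne {x y : ZMod 2} : x ≠ y → x + y = 1 := by
  revert x y; decide

end ZMod

@[simp]
theorem expressEdge_apply_self {n : ℕ} (F : (Fin n → ZMod 2) → Fin n → ZMod 2) (k t : Fin n)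
    (x : Fin n → ZMod 2) : expressEdge F k t x t = F (Function.update x k 1) t :=
  if_pos rfl

/-- Once a monomial vanishes, the deeper layers and the core no longer matter; each of the `ρ`
unit monomials before it only contributes a `+ 1`. -/
theorem nestAux_ofFn_of_eq_zero {r : ℕ} (g : Fin r → ZMod 2) (ρ : Fin r) (hρ : g ρ = 0)
    (hlt : ∀ i < ρ, g i = 1) (p : ZMod 2) : nestAux (List.ofFn g) p = 1 + (ρ : ℕ) := by
  induction r with
  | zero => exact ρ.elim0
  | succ r ih =>
    rw [List.ofFn_succ, nestAux]
    induction ρ using Fin.cases with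
    | zero => simp [hρ]
    | succ σ =>
      have hσ : nestAux (List.ofFn fun i => g i.succ) p = 1 + (σ : ℕ) :=
        ih _ σ hρ fun i hi => hlt i.succ (Fin.succ_lt_succ_iff.mpr hi)
      rw [hlt 0 (Fin.succ_pos σ), hσ, Fin.val_succ, Nat.cast_succ]
      ring

/-- The canalizing output of layer `ρ` is `b + ρ`, layers being `0`-indexed. -/
theorem LayerRep.apply_eq_of_canalizing_s2 {n : ℕ} {f : (Fin n → ZMod 2) → ZMod 2}
    (R : LayerRep n f) (x : Fin n → ZMod 2) (ρ : Fin R.r) {k : Fin n} (hk : k ∈ R.L ρ)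
    (hxk : x k = R.a k) (hdom : ∀ i < ρ, ∀ j ∈ R.L i, x j ≠ R.a j) :
    f x = R.b + (ρ : ℕ) := by
  have hρ : ∏ j ∈ R.L ρ, (x j + R.a j) = 0 :=
    Finset.prod_eq_zero hk (by rw [hxk, CharTwo.add_self_eq_zero])
  have hlt : ∀ i < ρ, ∏ j ∈ R.L i, (x j + R.a j) = 1 := fun i hi =>
    Finset.prod_eq_one fun j hj => ZMod.add_eq_one_of_ne (hdom i hi j hj)
  rw [R.repr_eq, nestAux_ofFn_of_eq_zero _ ρ hρ hlt]
  linear_combination CharTwo.add_self_eq_zero (1 : ZMod 2)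

theorem edge_expression_eliminates_transition_general {n : ℕ}
    (F : (Fin n → ZMod 2) → Fin n → ZMod 2) (t k : Fin n)
    (R : LayerRep n (fun x => F x t)) (ρ : Fin R.r) (hk : k ∈ R.L ρ)
    (u v : Fin n → ZMod 2)
    (h1 : ∀ i : Fin R.r, i < ρ → ∀ j ∈ R.L i, u j ≠ R.a j)
    (h2 : R.a k = 1)
    (h4 : R.b + ((ρ : ℕ) : ZMod 2) = v t + 1) :
    expressEdge F k t u t = v t + 1 ∧ expressEdge F k t u ≠ v := by
  have hdom : ∀ i < ρ, ∀ j ∈ R.L i, Function.update u k 1 j ≠ R.a j := by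
    intro i hi j hj
    have hjk : j ≠ k := by
      rintro rfl
      exact Finset.disjoint_left.mp (R.layers_disjoint i ρ hi.ne) hj hk
    rw [Function.update_of_ne hjk]
    exact h1 i hi j hj
  have ht : expressEdge F k t u t = v t + 1 := by
    rw [expressEdge_apply_self, ← h4]
    exact R.apply_eq_of_canalizing_s2 _ ρ hk (by rw [Function.update_self, h2]) hdom
  exact ⟨ht, fun heq => add_ne_left.mpr one_ne_zero (ht.symm.trans (congrFun heq t))⟩

/-- Method 1 (constant expression): if (1) no variable in a layer of `f_t` more
dominant than that of `x_k` assumes its canalizing input at `u`, (2) `x_k` has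
canalizing input `1`, (3) `u_k = 0`, and (4) the canalizing output `b + (ρ − 1)` of
`x_k` is the negation of `v_t`, then constantly expressing the edge `x_k → x_t`
eliminates the state-space transition `(u, v)`, where `v = F(u)`. (Layers are indexed
by `Fin R.r`, so the layer `ρ` here is `0`-indexed and the canalizing output of its
variables is `b + ρ`.) -/
theorem edge_expression_eliminates_transition {n : ℕ}
    (F : (Fin n → ZMod 2) → Fin n → ZMod 2) (t k : Fin n)
    (R : LayerRep n (fun x => F x t)) (ρ : Fin R.r) (hk : k ∈ R.L ρ)
    (u v : Fin n → ZMod 2) (hv : v = F u)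
    (h1 : ∀ i : Fin R.r, i < ρ → ∀ j ∈ R.L i, u j ≠ R.a j)
    (h2 : R.a k = 1) (h3 : u k = 0)
    (h4 : R.b + ((ρ : ℕ) : ZMod 2) = v t + 1) :
    expressEdge F k t u t = v t + 1 ∧ expressEdge F k t u ≠ v :=
  edge_expression_eliminates_transition_general F t k R ρ hk u v h1 h2 h4
end

section
/- Let f : (𝔽₂)ⁿ → 𝔽₂ admit a layer representation with layers L₁,…,L_r of sizes ℓ₁,…,ℓ_r, and let k ∈ L_ρ for some 1 ≤ ρ ≤ r (so x_k is a canalizing variable lying in the ρ-th layer). Then the number of states x ∈ (𝔽₂)ⁿ with f(x[k := 0]) ≠ f(x) is at most 2^{n − (ℓ₁ + ℓ₂ + ⋯ + ℓ_ρ)}. In particular, in a Boolean network F = (f₁,…,f_n) with f_t = f, deleting the edge x_k → x_t changes at most 2^{n − (ℓ₁ + ⋯ + ℓ_ρ)} of the 2ⁿ state-space transitions, i.e., the proportion of changed transitions is at most (1/2)^{ℓ₁ + ⋯ + ℓ_ρ}. -/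
open Finset Function

theorem card_filter_forall_ne {ι β : Type*} [Fintype ι] [DecidableEq ι] [Fintype β]
    [DecidableEq β] (S : Finset ι) (c : ι → β)
    [DecidablePred fun x : ι → β => ∀ j ∈ S, x j ≠ c j] :
    #{x : ι → β | ∀ j ∈ S, x j ≠ c j}
      = (Fintype.card β - 1) ^ #S * Fintype.card β ^ (Fintype.card ι - #S) := by
  have : ({x : ι → β | ∀ j ∈ S, x j ≠ c j} : Finset _)
      = Fintype.piFinset fun j => if j ∈ S then univ.erase (c j) else univ := by
    ext x
    simp only [mem_filter, mem_univ, true_and, Fintype.mem_piFinset]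
    refine forall_congr' fun j => ?_
    split_ifs <;> simp [*]
  rw [this, Fintype.card_piFinset]
  simp only [apply_ite Finset.card, card_erase_of_mem (mem_univ _), card_univ]
  rw [Finset.prod_ite, prod_const, prod_const, filter_mem_eq_inter, univ_inter,
    ← compl_filter, filter_mem_eq_inter, univ_inter, card_compl]

theorem ne_zero_and_ne_of_nestAux_ofFn_ne {r : ℕ} {M M' : Fin r → ZMod 2} {p : ZMod 2}
    {ρ : Fin r} (hM : ∀ i ≠ ρ, M i = M' i)
    (hne : nestAux (List.ofFn M) p ≠ nestAux (List.ofFn M') p) :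
    (∀ i < ρ, M i ≠ 0) ∧ M ρ ≠ M' ρ := by
  induction r with
  | zero => exact ρ.elim0
  | succ r ih =>
    simp only [List.ofFn_succ, nestAux] at hne
    induction ρ using Fin.cases with
    | zero =>
      refine ⟨fun i hi => absurd hi (Fin.not_lt_zero i), fun h0 => hne ?_⟩
      rw [h0, List.ofFn_inj.2 (funext fun i => hM i.succ (Fin.succ_ne_zero i))]
    | succ ρ =>
      rw [hM 0 (Fin.succ_ne_zero ρ).symm] at hne
      have htail : nestAux (List.ofFn fun i => M i.succ) p
          ≠ nestAux (List.ofFn fun i => M' i.succ) p := fun h => hne (by rw [h])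
      obtain ⟨hlt, hρ⟩ := ih (fun i hi => hM i.succ ((Fin.succ_injective _).ne hi)) htail
      refine ⟨Fin.cases ?_ fun i hi => hlt i (Fin.succ_lt_succ_iff.1 hi), hρ⟩
      intro _
      rw [hM 0 (Fin.succ_ne_zero ρ).symm]
      exact fun h => hne (by rw [h, zero_mul, zero_mul])

namespace LayerRep

variable {n : ℕ} {f : (Fin n → ZMod 2) → ZMod 2} (R : LayerRep n f)

def monomial (x : Fin n → ZMod 2) (i : Fin R.r) : ZMod 2 :=
  ∏ j ∈ R.L i, (x j + R.a j)

variable {R}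

theorem notMem_of_mem_of_ne {k : Fin n} {i ρ : Fin R.r} (hk : k ∈ R.L ρ) (hi : i ≠ ρ) :
    k ∉ R.L i :=
  disjoint_left.1 (R.layers_disjoint ρ i hi.symm) hk

theorem Pc_update_of_mem {k : Fin n} {ρ : Fin R.r} (hk : k ∈ R.L ρ) (x : Fin n → ZMod 2)
    (c : ZMod 2) : R.Pc (update x k c) = R.Pc x :=
  R.Pc_depends _ _ fun j hj => update_of_ne (fun h : j = k => hj ρ (h ▸ hk)) _ _

theorem monomial_update_of_notMem {k : Fin n} {i : Fin R.r} (hk : k ∉ R.L i)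
    (x : Fin n → ZMod 2) (c : ZMod 2) : R.monomial (update x k c) i = R.monomial x i :=
  prod_congr rfl fun _ hj => by rw [update_of_ne (ne_of_mem_of_not_mem hj hk)]

/-- Only the factor `x k + a k` of `M_ρ` sees the update, so `M_ρ` changes by
`x k * ∏_{j ≠ k} (x j + a j)`. -/
theorem ne_zero_of_monomial_update_zero_ne {k : Fin n} {ρ : Fin R.r} (hk : k ∈ R.L ρ)
    {x : Fin n → ZMod 2} (h : R.monomial (update x k 0) ρ ≠ R.monomial x ρ) :
    x k ≠ 0 ∧ ∀ j ∈ (R.L ρ).erase k, x j + R.a j ≠ 0 := by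
  set Q := ∏ j ∈ (R.L ρ).erase k, (x j + R.a j)
  have hQ : ∏ j ∈ (R.L ρ).erase k, (update x k 0 j + R.a j) = Q :=
    prod_congr rfl fun j hj => by rw [update_of_ne (ne_of_mem_erase hj)]
  have hdiff : x k * Q ≠ 0 := by
    rw [monomial, monomial, ← mul_prod_erase _ _ hk, ← mul_prod_erase _ _ hk, hQ,
      update_self] at h
    exact fun h0 => h (by linear_combination (-1 : ZMod 2) * h0)
  exact ⟨left_ne_zero_of_mul hdiff, prod_ne_zero_iff.1 (right_ne_zero_of_mul hdiff)⟩

theorem ne_of_apply_update_zero_ne {k : Fin n} {ρ : Fin R.r} (hk : k ∈ R.L ρ)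
    {x : Fin n → ZMod 2} (hx : f (update x k 0) ≠ f x) :
    ∀ j ∈ (Iic ρ).biUnion R.L, x j ≠ update R.a k 0 j := by
  have hnest : nestAux (List.ofFn (R.monomial x)) (R.Pc x)
      ≠ nestAux (List.ofFn (R.monomial (update x k 0))) (R.Pc x) := fun h =>
    hx (by rw [R.repr_eq, R.repr_eq, Pc_update_of_mem hk]; exact congrArg (· + 1 + R.b) h.symm)
  obtain ⟨hbefore, hat⟩ := ne_zero_and_ne_of_nestAux_ofFn_ne
    (fun i hi => (monomial_update_of_notMem (notMem_of_mem_of_ne hk hi) x 0).symm) hnest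
  obtain ⟨hxk, hrest⟩ := ne_zero_of_monomial_update_zero_ne hk (Ne.symm hat)
  intro j hj
  obtain ⟨i, hi, hji⟩ := mem_biUnion.1 hj
  by_cases hjk : j = k
  · subst hjk
    simpa using hxk
  rw [update_of_ne hjk]
  suffices x j + R.a j ≠ 0 from mt CharTwo.add_eq_zero.2 this
  rcases (mem_Iic.1 hi).lt_or_eq with hlt | rfl
  · exact prod_ne_zero_iff.1 (hbefore i hlt) j hji
  · exact hrest j (mem_erase.2 ⟨hjk, hji⟩)

end LayerRep

theorem deleteEdge_eq_iff {n : ℕ} {F : (Fin n → ZMod 2) → Fin n → ZMod 2} {k t : Fin n}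
    {x : Fin n → ZMod 2} : deleteEdge F k t x = F x ↔ F (update x k 0) t = F x t := by
  refine ⟨fun h => by simpa [deleteEdge] using congrFun h t, fun h => funext fun i => ?_⟩
  by_cases hi : i = t
  · subst hi; simp [deleteEdge, h]
  · simp [deleteEdge, hi]

/-- Method 2(a): if `x_k` is a canalizing variable of `f` lying in the `ρ`-th layer
(`0`-indexed here), then setting the `k`-th input to `0` changes the value of `f` on
at most `2 ^ (n − (ℓ₁ + ⋯ + ℓ_ρ))` states, where `ℓ₁, …, ℓ_ρ` are the sizes of the
layers that are at least as dominant as that of `x_k`.  Consequently, in a Boolean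
network `F` whose `t`-th coordinate function is `f`, deleting the edge `x_k → x_t`
changes at most `2 ^ (n − (ℓ₁ + ⋯ + ℓ_ρ))` of the `2ⁿ` state-space transitions. -/
theorem edge_deletion_change_bound_canalizing {n : ℕ}
    (f : (Fin n → ZMod 2) → ZMod 2) (R : LayerRep n f)
    (k : Fin n) (ρ : Fin R.r) (hk : k ∈ R.L ρ) :
    (Finset.univ.filter fun x : Fin n → ZMod 2 =>
        f (Function.update x k 0) ≠ f x).card
      ≤ 2 ^ (n - ∑ i ∈ Finset.Iic ρ, (R.L i).card) ∧
    ∀ (F : (Fin n → ZMod 2) → Fin n → ZMod 2) (t : Fin n),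
      (∀ x, F x t = f x) →
      (Finset.univ.filter fun x : Fin n → ZMod 2 =>
          deleteEdge F k t x ≠ F x).card
        ≤ 2 ^ (n - ∑ i ∈ Finset.Iic ρ, (R.L i).card) := by
  set S := (Iic ρ).biUnion R.L
  have hS : #S = ∑ i ∈ Iic ρ, #(R.L i) :=
    card_biUnion fun i _ j _ hij => R.layers_disjoint i j hij
  have bound : #{x : Fin n → ZMod 2 | f (update x k 0) ≠ f x}
      ≤ 2 ^ (n - ∑ i ∈ Iic ρ, #(R.L i)) :=
    calc _ ≤ #{x : Fin n → ZMod 2 | ∀ j ∈ S, x j ≠ update R.a k 0 j} :=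
          card_le_card fun x hx => mem_filter.2
            ⟨mem_univ x, LayerRep.ne_of_apply_update_zero_ne hk (mem_filter.1 hx).2⟩
      _ = 2 ^ (n - ∑ i ∈ Iic ρ, #(R.L i)) := by simp [card_filter_forall_ne, hS]
  refine ⟨bound, fun F t hFt => ?_⟩
  simpa only [ne_eq, deleteEdge_eq_iff, hFt] using bound
end

section
/- Let f : (𝔽₂)ⁿ → 𝔽₂ admit a layer representation with layers L₁,…,L_r and canalizing depth d = |L₁| + ⋯ + |L_r|, and let k be an index with k ∉ L₁ ∪ ⋯ ∪ L_r (so x_k is not a canalizing variable of f; it is a variable of the core polynomial P_c). Then the number of states x ∈ (𝔽₂)ⁿ with f(x[k := 0]) ≠ f(x) is at most 2^{n − d − 1}. In particular, in a Boolean network F = (f₁,…,f_n) with f_t = f, deleting the edge x_k → x_t changes at most 2^{n − d − 1} of the 2ⁿ state-space transitions. -/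
/-
If setting `x_k := 0` changes `f(x)`, then `x_k = 1`, and every layer monomial `M_i(x)` equals `1`:
the layers do not involve `x_k`, and once some `M_i(x)` vanishes the nested expression no longer
depends on the core `P_c`. In `𝔽₂` a product equals `1` only if each factor `x_j + a_j` does, so
such an `x` is pinned down on the `d + 1` coordinates `{k} ∪ L₁ ∪ ⋯ ∪ L_r`, leaving at most
`2^(n − d − 1)` choices.
-/

open Finset Function

lemma nestAux_eq_of_zero_mem {ms : List (ZMod 2)} (h : (0 : ZMod 2) ∈ ms) (p q : ZMod 2) :
    nestAux ms p = nestAux ms q := by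
  induction ms with
  | nil => simp at h
  | cons m ms ih =>
    rcases List.mem_cons.mp h with rfl | h
    · simp [nestAux]
    · simp [nestAux, ih h]

lemma eq_one_of_mem_of_nestAux_ne {ms : List (ZMod 2)} {p q : ZMod 2}
    (h : nestAux ms p ≠ nestAux ms q) {m : ZMod 2} (hm : m ∈ ms) : m = 1 :=
  Fin.eq_one_of_ne_zero m fun hm0 => h (nestAux_eq_of_zero_mem (hm0 ▸ hm) p q)

lemma ZMod.eq_one_of_prod_eq_one {ι : Type*} {s : Finset ι} {g : ι → ZMod 2}
    (h : ∏ j ∈ s, g j = 1) {j : ι} (hj : j ∈ s) : g j = 1 :=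
  Fin.eq_one_of_ne_zero _ (prod_ne_zero_iff.mp (h ▸ one_ne_zero) j hj)

lemma card_le_pow_of_forall_eq {ι α : Type*} [Fintype ι] [DecidableEq ι] [Fintype α]
    (S : Finset (ι → α)) (T : Finset ι) (c : ι → α) (h : ∀ x ∈ S, ∀ j ∈ T, x j = c j) :
    #S ≤ Fintype.card α ^ (Fintype.card ι - #T) := by
  calc #S ≤ #(univ : Finset ((Tᶜ : Finset ι) → α)) := by
        refine card_le_card_of_injOn (fun x j => x j) (fun _ _ => mem_univ _) ?_
        intro x hx y hy hxy
        funext j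
        by_cases hj : j ∈ T
        · rw [h x hx j hj, h y hy j hj]
        · exact congrFun hxy ⟨j, mem_compl.mpr hj⟩
    _ = Fintype.card α ^ (Fintype.card ι - #T) := by
        rw [card_univ, Fintype.card_fun, Fintype.card_coe, card_compl]

lemma eq_one_of_apply_update_zero_ne {ι β : Type*} [DecidableEq ι] {f : (ι → ZMod 2) → β}
    {x : ι → ZMod 2} {k : ι} (h : f (update x k 0) ≠ f x) : x k = 1 :=
  Fin.eq_one_of_ne_zero _ fun hxk => h (by rw [update_eq_self_iff.mpr hxk.symm])

namespace LayerRep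

variable {n : ℕ} {f : (Fin n → ZMod 2) → ZMod 2} (R : LayerRep n f)

def canalizingVars : Finset (Fin n) :=
  univ.biUnion R.L

lemma mem_canalizingVars {j : Fin n} : j ∈ R.canalizingVars ↔ ∃ i, j ∈ R.L i := by
  simp [canalizingVars]

lemma card_canalizingVars : #R.canalizingVars = ∑ i, #(R.L i) :=
  card_biUnion fun i _ i' _ hii' => R.layers_disjoint i i' hii'

lemma eq_one_sub_of_apply_ne {x y : Fin n → ZMod 2} (hxy : ∀ j ∈ R.canalizingVars, x j = y j)
    (hf : f x ≠ f y) : ∀ j ∈ R.canalizingVars, x j = 1 - R.a j := by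
  have hmonomials : (List.ofFn fun i => ∏ j ∈ R.L i, (y j + R.a j)) =
      List.ofFn fun i => ∏ j ∈ R.L i, (x j + R.a j) := by
    congr 1
    funext i
    exact prod_congr rfl fun j hj => by rw [hxy j (R.mem_canalizingVars.mpr ⟨i, hj⟩)]
  have hcore : nestAux (List.ofFn fun i => ∏ j ∈ R.L i, (x j + R.a j)) (R.Pc x) ≠
      nestAux (List.ofFn fun i => ∏ j ∈ R.L i, (x j + R.a j)) (R.Pc y) := by
    intro h
    apply hf
    rw [R.repr_eq, R.repr_eq, hmonomials, h]
  intro j hj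
  obtain ⟨i, hji⟩ := R.mem_canalizingVars.mp hj
  have hMi := eq_one_of_mem_of_nestAux_ne hcore (List.mem_ofFn.mpr ⟨i, rfl⟩)
  exact eq_sub_of_add_eq (ZMod.eq_one_of_prod_eq_one hMi hji)

end LayerRep

lemma filter_deleteEdge_ne {n : ℕ} {f : (Fin n → ZMod 2) → ZMod 2}
    {F : (Fin n → ZMod 2) → Fin n → ZMod 2} {t : Fin n} (hFt : ∀ x, F x t = f x) (k : Fin n) :
    univ.filter (fun x => deleteEdge F k t x ≠ F x) =
      univ.filter fun x => f (update x k 0) ≠ f x := by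
  ext x
  simp only [mem_filter, mem_univ, true_and, ne_eq, not_iff_not, funext_iff, deleteEdge]
  constructor
  · intro h
    simpa [hFt] using h t
  · intro h i
    split_ifs with hi
    · rw [hi, hFt, hFt, h]
    · rfl

/-- Method 2(b): if `x_k` is not a canalizing variable of `f` (it lies outside all
layers, i.e. it is a variable of the core polynomial `P_c`), and `d = ℓ₁ + ⋯ + ℓ_r`
is the canalizing depth of `f`, then setting the `k`-th input to `0` changes the
value of `f` on at most `2 ^ (n − d − 1)` states.  Consequently, in a Boolean network
`F` whose `t`-th coordinate function is `f`, deleting the edge `x_k → x_t` changes at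
most `2 ^ (n − d − 1)` of the `2ⁿ` state-space transitions. -/
theorem edge_deletion_change_bound_noncanalizing {n : ℕ}
    (f : (Fin n → ZMod 2) → ZMod 2) (R : LayerRep n f)
    (k : Fin n) (hk : ∀ i, k ∉ R.L i) :
    (Finset.univ.filter fun x : Fin n → ZMod 2 =>
        f (Function.update x k 0) ≠ f x).card
      ≤ 2 ^ (n - (∑ i, (R.L i).card) - 1) ∧
    ∀ (F : (Fin n → ZMod 2) → Fin n → ZMod 2) (t : Fin n),
      (∀ x, F x t = f x) →
      (Finset.univ.filter fun x : Fin n → ZMod 2 =>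
          deleteEdge F k t x ≠ F x).card
        ≤ 2 ^ (n - (∑ i, (R.L i).card) - 1) := by
  have hkR : k ∉ R.canalizingVars := by simpa [R.mem_canalizingVars] using hk
  have hpinned : ∀ x ∈ (univ.filter fun x : Fin n → ZMod 2 => f (update x k 0) ≠ f x),
      ∀ j ∈ insert k R.canalizingVars, x j = if j = k then 1 else 1 - R.a j := by
    intro x hx j hj
    have hx : f (update x k 0) ≠ f x := (mem_filter.mp hx).2
    rcases mem_insert.mp hj with rfl | hjR
    · simpa using eq_one_of_apply_update_zero_ne hx
    · rw [if_neg (ne_of_mem_of_not_mem hjR hkR)]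
      refine R.eq_one_sub_of_apply_ne (fun i hi => ?_) hx.symm j hjR
      exact (update_of_ne (ne_of_mem_of_not_mem hi hkR) _ _).symm
  have hchanged := card_le_pow_of_forall_eq _ _ _ hpinned
  rw [card_insert_of_notMem hkR, R.card_canalizingVars, ZMod.card, Fintype.card_fin,
    ← Nat.sub_sub] at hchanged
  exact ⟨hchanged, fun F t hFt => (filter_deleteEdge_ne hFt k).symm ▸ hchanged⟩
end

section
/- In the p53–mdm2 Boolean network with DNA-damage input c = 1, the map F₁ has no fixed points, and the seven states (1,1,0,0), (1,1,1,0), (0,1,1,0), (0,1,1,1), (0,0,1,1), (0,0,0,1), (1,0,0,0) form a cycle of length seven: F₁(1,1,0,0) = (1,1,1,0), F₁(1,1,1,0) = (0,1,1,0), F₁(0,1,1,0) = (0,1,1,1), F₁(0,1,1,1) = (0,0,1,1), F₁(0,0,1,1) = (0,0,0,1), F₁(0,0,0,1) = (1,0,0,0), and F₁(1,0,0,0) = (1,1,0,0). -/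
/-- The p53–mdm2 Boolean network with DNA-damage input `c`, on states
`(ATM, p53, Wip1, Mdm2) = (x 0, x 1, x 2, x 3)`, with update rules
`ATM' = ¬Wip1 ∧ (ATM ∨ c)`, `p53' = ¬Mdm2 ∧ (ATM ∨ Wip1)`, `Wip1' = p53`,
`Mdm2' = ¬ATM ∧ (p53 ∨ Wip1)`. -/
def p53Net (c : Bool) (x : Fin 4 → Bool) : Fin 4 → Bool :=
  ![!x 2 && (x 0 || c),
    !x 3 && (x 0 || x 2),
    x 1,
    !x 0 && (x 1 || x 2)]

/-!
At a fixed point of `p53Net true` we have Wip1 = p53 and ATM = ¬Wip1, so `ATM ∨ Wip1` holds and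
the rules for p53 and Mdm2 collapse to p53 = ¬Mdm2 and Mdm2 = p53, which is impossible.
-/

theorem p53Net_true_ne_self (x : Fin 4 → Bool) : p53Net true x ≠ x := by
  intro h
  have hATM : (!x 2) = x 0 := by simpa [p53Net] using congrFun h 0
  have hp53 : (!x 3 && (x 0 || x 2)) = x 1 := congrFun h 1
  have hWip1 : x 1 = x 2 := congrFun h 2
  have hMdm2 : (!x 0 && (x 1 || x 2)) = x 3 := congrFun h 3
  rw [← hATM, ← hWip1] at hp53 hMdm2
  have hp53_eq_not_Mdm2 : (!x 3) = x 1 := by simpa using hp53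
  have hMdm2_eq_p53 : x 1 = x 3 := by simpa using hMdm2
  simp [hMdm2_eq_p53] at hp53_eq_not_Mdm2

/-- With DNA-damage input `c = 1`, the p53–mdm2 network has no fixed points, and the
seven states `(1,1,0,0), (1,1,1,0), (0,1,1,0), (0,1,1,1), (0,0,1,1), (0,0,0,1),
(1,0,0,0)` form a cycle of length seven. -/
theorem p53_damage_seven_cycle :
    (∀ x : Fin 4 → Bool, p53Net true x ≠ x) ∧
    p53Net true ![true, true, false, false] = ![true, true, true, false] ∧
    p53Net true ![true, true, true, false] = ![false, true, true, false] ∧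
    p53Net true ![false, true, true, false] = ![false, true, true, true] ∧
    p53Net true ![false, true, true, true] = ![false, false, true, true] ∧
    p53Net true ![false, false, true, true] = ![false, false, false, true] ∧
    p53Net true ![false, false, false, true] = ![true, false, false, false] ∧
    p53Net true ![true, false, false, false] = ![true, true, false, false] :=
  ⟨p53Net_true_ne_self, by decide⟩
end

section
/- The mutated mammalian cell-cycle Boolean network F : {0,1}⁸ → {0,1}⁸ (Rb absent, CycD = 0) has a periodic orbit of minimal period 8: there exists a state x ∈ {0,1}⁸ with F⁸(x) = x and F^j(x) ≠ x for all 1 ≤ j ≤ 7. -/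
/-- The mutated mammalian cell-cycle Boolean network (Rb absent, CycD = 0), on states
`(E2F, CycE, CycA, p27, Cdc20, Cdh1, Ubc, CycB) = (x 0, …, x 7)`, with update rules
`E2F' = (¬CycA ∧ ¬CycB) ∨ (p27 ∧ ¬CycB)`; `CycE' = E2F`;
`CycA' = (E2F ∧ ¬Cdc20 ∧ ¬(Cdh1 ∧ Ubc)) ∨ (CycA ∧ ¬Cdc20 ∧ ¬(Cdh1 ∧ Ubc))`;
`p27' = (p27 ∧ ¬(CycE ∧ CycA) ∧ ¬CycB) ∨ (¬CycE ∧ ¬CycA ∧ ¬CycB)`;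
`Cdc20' = CycB`; `Cdh1' = (¬CycA ∧ ¬CycB) ∨ Cdc20 ∨ (p27 ∧ ¬CycB)`;
`Ubc' = ¬Cdh1 ∨ (Cdh1 ∧ Ubc ∧ (Cdc20 ∨ CycA ∨ CycB))`; `CycB' = ¬Cdc20 ∧ ¬Cdh1`. -/
def ccNet (x : Fin 8 → Bool) : Fin 8 → Bool :=
  ![(!x 2 && !x 7) || (x 3 && !x 7),
    x 0,
    (x 0 && !x 4 && !(x 5 && x 6)) || (x 2 && !x 4 && !(x 5 && x 6)),
    (x 3 && !(x 1 && x 2) && !x 7) || (!x 1 && !x 2 && !x 7),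
    x 7,
    (!x 2 && !x 7) || x 4 || (x 3 && !x 7),
    !x 5 || (x 5 && x 6 && (x 4 || x 2 || x 7)),
    !x 4 && !x 5]

/-!
The network cycles through eight distinct states starting from the one in which only Cdc20,
Cdh1 and Ubc are active. Since that state returns after 8 steps but not after 4, its minimal
period divides 8 and not 4, so it is exactly 8.
-/

open Function

def ccCycleStart : Fin 8 → Bool := ![false, false, false, false, true, true, true, false]

theorem isPeriodicPt_ccNet_eight_ccCycleStart : IsPeriodicPt ccNet 8 ccCycleStart := by
  decide

theorem not_isPeriodicPt_ccNet_four_ccCycleStart : ¬IsPeriodicPt ccNet 4 ccCycleStart := by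
  decide

theorem minimalPeriod_ccNet_ccCycleStart : minimalPeriod ccNet ccCycleStart = 8 :=
  minimalPeriod_eq_prime_pow (p := 2) (k := 2) not_isPeriodicPt_ccNet_four_ccCycleStart
    isPeriodicPt_ccNet_eight_ccCycleStart

/-- The mutated cell-cycle network has a periodic orbit of minimal period 8. -/
theorem ccNet_has_eight_cycle :
    ∃ x : Fin 8 → Bool, ccNet^[8] x = x ∧
      ∀ j : ℕ, 1 ≤ j → j ≤ 7 → ccNet^[j] x ≠ x := by
  refine ⟨ccCycleStart, isPeriodicPt_ccNet_eight_ccCycleStart, fun j hj1 hj7 => ?_⟩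
  exact not_isPeriodicPt_of_pos_of_lt_minimalPeriod (by omega)
    (by rw [minimalPeriod_ccNet_ccCycleStart]; omega)
end

section
/- Let F′ : {0,1}⁸ → {0,1}⁸ be obtained from the mutated mammalian cell-cycle Boolean network F (Rb absent, CycD = 0) by deleting the edge Cdh1 → Ubc, i.e., replacing the Ubc update rule by its value with the Cdh1 input set to 0 (so Ubc' = ¬0 ∨ (0 ∧ Ubc ∧ (Cdc20 ∨ CycA ∨ CycB)) = 1). Then F′ has a fixed point x* with x*_{p27} = 1 and x*_{Cdh1} = 1 whose basin of attraction contains more than 90% of the state space: the set {x ∈ {0,1}⁸ : ∃ m ≥ 0, F′^m(x) = x*} has cardinality at least 231 out of 256. -/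
/-- Deleting the edge `x_k → x_t` in a Boolean network `F`: the coordinate function
`f_t` is replaced by `x ↦ f_t(x[k := false])` (the `k`-th input set to `0`). -/
def deleteEdgeB {n : ℕ} (F : (Fin n → Bool) → Fin n → Bool) (k t : Fin n) :
    (Fin n → Bool) → Fin n → Bool :=
  fun x i => if i = t then F (Function.update x k false) t else F x i

/-- Constantly expressing the edge `x_k → x_t` in a Boolean network `F`: the
coordinate function `f_t` is replaced by `x ↦ f_t(x[k := true])` (the `k`-th input
set to `1`). -/
def expressEdgeB {n : ℕ} (F : (Fin n → Bool) → Fin n → Bool) (k t : Fin n) :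
    (Fin n → Bool) → Fin n → Bool :=
  fun x i => if i = t then F (Function.update x k true) t else F x i

/-! Once the edge Cdh1 → Ubc is deleted, Ubc is switched on after one step and stays on.
The state `xStar = (1, 1, 0, 1, 0, 1, 1, 0)` is then fixed, and iterating six times from each of
the 256 states shows that 242 of them land on it; the other 14 flow into the fixed point
`(1, 1, 0, 0, 0, 1, 1, 0)`, which differs from `xStar` only in p27. -/

section

open Finset

def basin {α : Type*} (f : α → α) (x : α) : Set α :=
  {y | ∃ m : ℕ, f^[m] y = x}

theorem card_filter_iterate_eq_le_ncard_basin {α : Type*} [Fintype α] [DecidableEq α]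
    (f : α → α) (x : α) (n : ℕ) :
    #{y | f^[n] y = x} ≤ (basin f x).ncard := by
  rw [← Set.ncard_coe_finset]
  exact Set.ncard_le_ncard fun y hy => ⟨n, by simpa using hy⟩

def xStar : Fin 8 → Bool := ![true, true, false, true, false, true, true, false]

theorem deleteEdgeB_ccNet_Cdh1_Ubc_xStar_eq : deleteEdgeB ccNet 5 6 xStar = xStar := by
  decide

set_option maxRecDepth 10000 in
theorem card_iterate_six_deleteEdgeB_ccNet_Cdh1_Ubc_eq_xStar :
    #{y | (deleteEdgeB ccNet 5 6)^[6] y = xStar} = 242 := by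
  decide

end

/-- Deleting the edge Cdh1 → Ubc (indices `5 → 6`) in the mutated cell-cycle network
yields a network with a fixed point having `p27 = 1` (coordinate 3) and `Cdh1 = 1`
(coordinate 5) whose basin of attraction contains more than 90% of the state space:
at least 231 of the 256 states eventually reach it. -/
theorem ccNet_delete_Cdh1_Ubc :
    ∃ x : Fin 8 → Bool, deleteEdgeB ccNet 5 6 x = x ∧
      x 3 = true ∧ x 5 = true ∧
      231 ≤ Set.ncard {y : Fin 8 → Bool | ∃ m : ℕ, (deleteEdgeB ccNet 5 6)^[m] y = x} := by
  refine ⟨xStar, deleteEdgeB_ccNet_Cdh1_Ubc_xStar_eq, rfl, rfl, ?_⟩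
  calc 231 ≤ 242 := by norm_num
    _ = (Finset.univ.filter fun y => (deleteEdgeB ccNet 5 6)^[6] y = xStar).card :=
        card_iterate_six_deleteEdgeB_ccNet_Cdh1_Ubc_eq_xStar.symm
    _ ≤ (basin (deleteEdgeB ccNet 5 6) xStar).ncard :=
        card_filter_iterate_eq_le_ncard_basin _ _ _
end
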